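/- Hook length formula for binary trees with multiplicities: for every binary tree with multiplicities T of size n, the number f(T) of packed words w (necessarily of length n) with B(w) = T equals n! divided by the product, over all nodes v of T, of |T_v|·(m(v) − 1)!, where T_v is the subtree of T rooted at v, |T_v| is its size, and m(v) is the multiplicity labelling v. -/

import Mathlib

open scoped Classical

/-- Words over the positive integers. -/
abbrev Word : Type := List ℕ+

/-- Evaluation of a word: number of occurrences of each letter. -/
def ev (w : Word) : ℕ+ → ℕ := fun a => w.count a

/-- A monoid congruence on the free monoid `(ℕ⁺)*`. -/
def IsCongruence (r : Word → Word → Prop) : Prop :=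
  Equivalence r ∧ ∀ u v u' v', r u v → r u' v' → r (u ++ u') (v ++ v')

/-- Restriction of a word to the letters belonging to a set `I`. -/
noncomputable def restrictTo (I : Set ℕ+) (w : Word) : Word :=
  w.filter fun a => decide (a ∈ I)

/-- `I` is an interval (order-convex subset) of `ℕ⁺`. -/
def IsIntervalSet (I : Set ℕ+) : Prop :=
  ∀ ⦃a b c : ℕ+⦄, a ∈ I → c ∈ I → a ≤ b → b ≤ c → b ∈ I

/-- Compatibility with restriction to alphabet intervals. -/
def CompatRestrict (r : Word → Word → Prop) : Prop :=
  ∀ I : Set ℕ+, IsIntervalSet I → ∀ u v, r u v → r (restrictTo I u) (restrictTo I v)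

/-- `r` is a `φ`-congruence. -/
def IsPhiCongruence (φ : Word → Word) (r : Word → Word → Prop) : Prop :=
  ∀ u v, r u v ↔ (r (φ u) (φ v) ∧ ev u = ev v)

/-- Standardization. -/
def std (w : Word) : Word :=
  (List.range w.length).map fun i =>
    ⟨((List.range w.length).countP fun j =>
        decide (w.getD j 1 < w.getD i 1 ∨ (w.getD j 1 = w.getD i 1 ∧ j < i))) + 1,
      Nat.succ_pos _⟩

/-- Packing. -/
def pack (w : Word) : Word :=
  w.map fun a => ⟨(w.dedup.countP fun b => decide (b < a)) + 1, Nat.succ_pos _⟩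

theorem parkBad_ex (w : Word) :
    ∃ d : ℕ, 1 ≤ d ∧ (w.countP fun a : ℕ+ => decide ((a : ℕ) ≤ d)) < d :=
  ⟨w.length + 1, Nat.succ_le_succ (Nat.zero_le _), by
    have h : (w.countP fun a : ℕ+ => decide ((a : ℕ) ≤ w.length + 1)) ≤ w.length :=
      List.countP_le_length
    omega⟩

/-- The smallest `d ≥ 1` such that fewer than `d` letters of `w` are `≤ d`. -/
noncomputable def parkBad (w : Word) : ℕ := Nat.find (parkBad_ex w)

/-- One pass of the parkization procedure, with fuel. -/
noncomputable def parkAux : ℕ → Word → Word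
  | 0, w => w
  | f + 1, w =>
    if parkBad w ≤ w.length then
      parkAux f (w.map fun a : ℕ+ => if parkBad w < (a : ℕ) then (a - 1 : ℕ+) else a)
    else w

/-- Parkization. The fuel `(sum of the letters)` always suffices,
since every pass strictly decreases the sum of the letters. -/
noncomputable def park (w : Word) : Word := parkAux (w.map fun a => (a : ℕ)).sum w

/-- Smallest monoid congruence containing `base`. -/
def CongClosure (base : Word → Word → Prop) (u v : Word) : Prop :=
  ∀ r : Word → Word → Prop, IsCongruence r → (∀ x y, base x y → r x y) → r u v

def sylvBase (x y : Word) : Prop :=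
  ∃ (a b c : ℕ+) (v : Word), a ≤ b ∧ b < c ∧
    x = a :: c :: (v ++ [b]) ∧ y = c :: a :: (v ++ [b])

/-- The sylvester congruence. -/
def sylv : Word → Word → Prop := CongClosure sylvBase

def stalBase (x y : Word) : Prop :=
  ∃ (a b : ℕ+) (v : Word), x = b :: a :: (v ++ [b]) ∧ y = a :: b :: (v ++ [b])

/-- The stalactic congruence. -/
def stal : Word → Word → Prop := CongClosure stalBase

def sylvSharpBase (x y : Word) : Prop :=
  ∃ (a b c : ℕ+) (v : Word), a < b ∧ b ≤ c ∧
    x = b :: (v ++ [a, c]) ∧ y = b :: (v ++ [c, a])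

/-- The #-sylvester congruence. -/
def sylvSharp : Word → Word → Prop := CongClosure sylvSharpBase

/-- The taïga congruence: join of the sylvester and stalactic congruences. -/
def taiga : Word → Word → Prop := CongClosure fun u v => sylv u v ∨ stal u v

/-- Planar binary trees with letter labels. -/
inductive BT : Type where
  | leaf : BT
  | node : BT → ℕ+ → BT → BT
deriving DecidableEq

/-- Binary search tree insertion of a letter. -/
def BT.insert : BT → ℕ+ → BT
  | .leaf, l => .node .leaf l .leaf
  | .node L b R, l => if l ≤ b then .node (L.insert l) b R else .node L b (R.insert l)

/-- Binary search tree of a word: insert the letters from right to left. -/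
def bst (w : Word) : BT := w.foldr (fun l t => t.insert l) .leaf

/-- Planar binary trees labelled by a letter and a multiplicity. -/
inductive BSTM : Type where
  | leaf : BSTM
  | node : BSTM → ℕ+ → ℕ+ → BSTM → BSTM   -- left, letter, multiplicity, right
deriving DecidableEq

/-- Insertion of a letter into a binary search tree with multiplicities. -/
def BSTM.insert : BSTM → ℕ+ → BSTM
  | .leaf, l => .node .leaf l 1 .leaf
  | .node L l' k R, l =>
    if l = l' then .node L l' (k + 1) R
    else if l < l' then .node (L.insert l) l' k R
    else .node L l' k (R.insert l)

/-- The `P`-symbol: insert the letters of `w` from right to left. -/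
def Pmap (w : Word) : BSTM := w.foldr (fun l t => t.insert l) .leaf

/-- Letters of a BSTM in left-to-right (infix) order. -/
def BSTM.letters : BSTM → List ℕ+
  | .leaf => []
  | .node L l _ R => L.letters ++ l :: R.letters

/-- The binary search tree property for a BSTM. -/
def BSTM.IsSearchTree : BSTM → Prop
  | .leaf => True
  | .node L l _ R =>
      (∀ x ∈ L.letters, x < l) ∧ (∀ x ∈ R.letters, l < x) ∧
        L.IsSearchTree ∧ R.IsSearchTree

/-- Total multiplicity of a letter in a BSTM. -/
def BSTM.mult : BSTM → ℕ+ → ℕ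
  | .leaf, _ => 0
  | .node L l k R, a => L.mult a + (if a = l then (k : ℕ) else 0) + R.mult a

/-- Size of a BSTM: sum of the multiplicities. -/
def BSTM.size : BSTM → ℕ
  | .leaf => 0
  | .node L _ k R => L.size + (k : ℕ) + R.size

/-- Planar binary trees with multiplicities. -/
inductive BTM : Type where
  | leaf : BTM
  | node : BTM → ℕ+ → BTM → BTM
deriving DecidableEq

/-- Size of a BTM: sum of the multiplicities. -/
def BTM.size : BTM → ℕ
  | .leaf => 0
  | .node L k R => L.size + (k : ℕ) + R.size

/-- Number of nodes of a BTM. -/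
def BTM.numNodes : BTM → ℕ
  | .leaf => 0
  | .node L _ R => L.numNodes + 1 + R.numNodes

/-- Forgetting the letters of a BSTM gives a BTM. -/
def forgetLetters : BSTM → BTM
  | .leaf => .leaf
  | .node L _ k R => .node (forgetLetters L) k (forgetLetters R)

/-- The `B`-symbol: the BTM underlying `P(w)`. -/
def Bmap (w : Word) : BTM := forgetLetters (Pmap w)

/-- A packed word: its set of letters is `{1, …, k}` for some `k`. -/
def IsPacked (w : Word) : Prop := ∀ a ∈ w, ∀ b : ℕ+, b ≤ a → b ∈ w

/-- Number of packed words inserting to the BTM `T`. -/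
noncomputable def fT (T : BTM) : ℕ :=
  Set.ncard {w : Word | IsPacked w ∧ Bmap w = T}

/-- The hook-type product over the subtrees of a BTM. -/
def hookProd : BTM → ℕ
  | .leaf => 1
  | .node L k R =>
      (BTM.node L k R).size * ((k : ℕ) - 1).factorial * hookProd L * hookProd R

/-- Label the nodes of a BTM in infix order starting from a given letter;
returns the labelled tree and the next unused letter. -/
def infixLabelAux : BTM → ℕ+ → BSTM × ℕ+
  | .leaf, n => (.leaf, n)
  | .node L k R, n =>
    let p := infixLabelAux L n
    let q := infixLabelAux R (p.2 + 1)
    (.node p.1 p.2 k q.1, q.2)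

/-- Label the nodes of a BTM by `1, …, k` in infix order. -/
def infixLabel (T : BTM) : BSTM := (infixLabelAux T 1).1

/-!
The last letter `a` of a word `w` sits at the root of `P(w)`, with multiplicity the number of
occurrences of `a`, and the left (right) subtree is `P` of the subword of letters smaller (larger)
than `a`. If `w` is packed and `B(w) = node L k R`, this forces `a` to be the number of nodes of
`L` plus one, and `w` is any shuffle of a packed word for `L`, of `k - 1` letters `a` and of a
packed word for `R` shifted up by `a`, followed by `a`. Hence
`f(node L k R) = (|L| + k - 1 + |R|)! / (|L|! (k - 1)! |R|!) * f(L) * f(R)`,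
which is the recursion satisfied by `n! / hookProd`.
-/

open scoped Nat Function

namespace BSTM

def mapLetters (f : ℕ+ → ℕ+) : BSTM → BSTM
  | .leaf => .leaf
  | .node L l k R => .node (L.mapLetters f) (f l) k (R.mapLetters f)

theorem size_insert (t : BSTM) (x : ℕ+) : (t.insert x).size = t.size + 1 := by
  induction t with
  | leaf => rfl
  | node L l k R ihL ihR =>
    simp only [BSTM.insert]
    split_ifs <;> simp only [size, ihL, ihR, PNat.add_coe, PNat.one_coe] <;> omega

theorem mapLetters_insert {f : ℕ+ → ℕ+} (hf : StrictMono f) (t : BSTM) (x : ℕ+) :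
    (t.insert x).mapLetters f = (t.mapLetters f).insert (f x) := by
  induction t with
  | leaf => rfl
  | node L l k R ihL ihR =>
    simp only [BSTM.insert, mapLetters, hf.injective.eq_iff, hf.lt_iff_lt]
    split_ifs <;> simp [mapLetters, ihL, ihR]

theorem forgetLetters_mapLetters (f : ℕ+ → ℕ+) (t : BSTM) :
    forgetLetters (t.mapLetters f) = forgetLetters t := by
  induction t with
  | leaf => rfl
  | node L l k R ihL ihR => simp [mapLetters, forgetLetters, ihL, ihR]

theorem mem_letters_insert (t : BSTM) (x y : ℕ+) :
    y ∈ (t.insert x).letters ↔ y = x ∨ y ∈ t.letters := by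
  induction t with
  | leaf => simp [BSTM.insert, letters]
  | node L l k R ihL ihR =>
    simp only [BSTM.insert]
    split_ifs with h
    · subst h; simp [letters]; tauto
    · simp [letters, ihL]; tauto
    · simp [letters, ihR]; tauto

theorem IsSearchTree.insert {t : BSTM} (ht : t.IsSearchTree) (x : ℕ+) :
    (t.insert x).IsSearchTree := by
  induction t with
  | leaf => simp [BSTM.insert, IsSearchTree, letters]
  | node L l k R ihL ihR =>
    obtain ⟨hL, hR, hLst, hRst⟩ := ht
    simp only [BSTM.insert]
    split_ifs with heq hlt
    · exact ⟨hL, hR, hLst, hRst⟩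
    · refine ⟨fun y hy => ?_, hR, ihL hLst, hRst⟩
      rcases (mem_letters_insert L x y).mp hy with rfl | hy
      exacts [hlt, hL y hy]
    · refine ⟨hL, fun y hy => ?_, hLst, ihR hRst⟩
      rcases (mem_letters_insert R x y).mp hy with rfl | hy
      exacts [lt_of_le_of_ne (not_lt.mp hlt) (Ne.symm heq), hR y hy]

theorem IsSearchTree.nodup_letters {t : BSTM} (ht : t.IsSearchTree) : t.letters.Nodup := by
  induction t with
  | leaf => exact List.nodup_nil
  | node L l k R ihL ihR =>
    obtain ⟨hL, hR, hLst, hRst⟩ := ht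
    simp only [letters, List.nodup_append, List.nodup_cons]
    refine ⟨ihL hLst, ⟨fun hl => lt_irrefl l (hR l hl), ihR hRst⟩, ?_⟩
    intro y hy z hz
    rcases List.mem_cons.mp hz with rfl | hz
    · exact (hL y hy).ne
    · exact ((hL y hy).trans (hR z hz)).ne

end BSTM

theorem numNodes_forgetLetters (t : BSTM) : (forgetLetters t).numNodes = t.letters.length := by
  induction t with
  | leaf => rfl
  | node L l k R ihL ihR =>
    simp only [forgetLetters, BTM.numNodes, BSTM.letters, ihL, ihR, List.length_append,
      List.length_cons]
    omega

theorem size_forgetLetters (t : BSTM) : (forgetLetters t).size = t.size := by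
  induction t with
  | leaf => rfl
  | node L l k R ihL ihR => simp [forgetLetters, BTM.size, BSTM.size, ihL, ihR]

theorem Pmap_cons (x : ℕ+) (w : Word) : Pmap (x :: w) = (Pmap w).insert x := rfl

theorem size_Pmap (w : Word) : (Pmap w).size = w.length := by
  induction w with
  | nil => rfl
  | cons x w ih => rw [Pmap_cons, BSTM.size_insert, ih, List.length_cons]

theorem Pmap_map {f : ℕ+ → ℕ+} (hf : StrictMono f) (w : Word) :
    Pmap (w.map f) = (Pmap w).mapLetters f := by
  induction w with
  | nil => rfl
  | cons x w ih => rw [List.map_cons, Pmap_cons, Pmap_cons, ih, BSTM.mapLetters_insert hf]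

theorem isSearchTree_Pmap (w : Word) : (Pmap w).IsSearchTree := by
  induction w with
  | nil => trivial
  | cons x w ih => exact ih.insert x

theorem mem_letters_Pmap (w : Word) (y : ℕ+) : y ∈ (Pmap w).letters ↔ y ∈ w := by
  induction w with
  | nil => simp [Pmap, BSTM.letters]
  | cons x w ih => rw [Pmap_cons, BSTM.mem_letters_insert, ih, List.mem_cons]

theorem Pmap_append_singleton (w : Word) (a : ℕ+) :
    Pmap (w ++ [a]) = .node (Pmap (w.filter (· < a))) a (w.count a).succPNat
      (Pmap (w.filter (a < ·))) := by
  induction w with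
  | nil => rfl
  | cons x w ih =>
    rw [List.cons_append, Pmap_cons, ih]
    rcases lt_trichotomy x a with hx | rfl | hx
    · simp [BSTM.insert, hx, hx.ne, hx.not_gt, Pmap_cons]
    · simp [BSTM.insert]
      rfl
    · simp [BSTM.insert, hx, hx.ne', hx.not_gt, Pmap_cons]

theorem Bmap_append_singleton (w : Word) (a : ℕ+) :
    Bmap (w ++ [a]) = .node (Bmap (w.filter (· < a))) (w.count a).succPNat
      (Bmap (w.filter (a < ·))) := by
  rw [Bmap, Pmap_append_singleton]
  rfl

theorem Bmap_map {f : ℕ+ → ℕ+} (hf : StrictMono f) (w : Word) : Bmap (w.map f) = Bmap w := by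
  rw [Bmap, Bmap, Pmap_map hf, BSTM.forgetLetters_mapLetters]

theorem size_Bmap (w : Word) : (Bmap w).size = w.length := by
  rw [Bmap, size_forgetLetters, size_Pmap]

theorem numNodes_Bmap (w : Word) : (Bmap w).numNodes = w.toFinset.card := by
  have hletters : (Pmap w).letters.toFinset = w.toFinset := by
    ext y
    simp [mem_letters_Pmap]
  rw [Bmap, numNodes_forgetLetters, ← hletters,
    List.toFinset_card_of_nodup (isSearchTree_Pmap w).nodup_letters]

theorem IsPacked.mem_iff_le_card {w : Word} (hw : IsPacked w) (x : ℕ+) :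
    x ∈ w ↔ (x : ℕ) ≤ w.toFinset.card := by
  constructor
  · intro hx
    have hsub : Finset.Icc 1 x ⊆ w.toFinset := fun b hb =>
      List.mem_toFinset.mpr (hw x hx b (Finset.mem_Icc.mp hb).2)
    simpa using Finset.card_le_card hsub
  · intro hx
    by_contra hxw
    have hsub : w.toFinset ⊆ Finset.Ico 1 x := fun b hb => by
      refine Finset.mem_Ico.mpr ⟨one_le, lt_of_not_ge fun hxb => hxw ?_⟩
      exact hw b (List.mem_toFinset.mp hb) x hxb
    have := Finset.card_le_card hsub
    rw [PNat.card_Ico, PNat.one_coe] at this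
    have := x.pos
    omega

theorem forall_lt_mem_iff_isPacked {u : Word} {a : ℕ+} (hu : ∀ x ∈ u, x < a) :
    (∀ x < a, x ∈ u) ↔ IsPacked u ∧ (a : ℕ) = u.toFinset.card + 1 := by
  constructor
  · intro h
    have hset : u.toFinset = Finset.Ico 1 a := by
      ext x
      rw [List.mem_toFinset, Finset.mem_Ico]
      exact ⟨fun hx => ⟨one_le, hu x hx⟩, fun hx => h x hx.2⟩
    refine ⟨fun x hx b hb => h b (hb.trans_lt (hu x hx)), ?_⟩
    rw [hset, PNat.card_Ico, PNat.one_coe]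
    have := a.pos
    omega
  · rintro ⟨hpacked, hcard⟩ x hx
    rw [hpacked.mem_iff_le_card]
    have : (x : ℕ) < a := hx
    omega

theorem isPacked_append_singleton_iff {w v : Word} {a : ℕ+}
    (hv : w.filter (a < ·) = v.map (a + ·)) :
    IsPacked (w ++ [a]) ↔ (∀ x < a, x ∈ w) ∧ IsPacked v := by
  have hshift : ∀ y, a + y ∈ w ↔ y ∈ v := fun y => by
    rw [← List.mem_map_of_injective (add_right_injective a) (l := v), ← hv, List.mem_filter]
    simp [PNat.lt_add_right]
  have ha : a ∈ w ++ [a] := List.mem_append_right w (List.mem_singleton_self a)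
  constructor
  · intro hw
    refine ⟨fun x hx => ?_, fun y hy b hb => ?_⟩
    · simpa [hx.ne] using hw a ha x hx.le
    · rw [← hshift] at hy ⊢
      have := hw _ (List.mem_append_left _ hy) (a + b) ((add_le_add_iff_left a).mpr hb)
      simpa [(PNat.lt_add_right a b).ne'] using this
  · rintro ⟨hlt, hvpacked⟩ x hx b hb
    rcases lt_trichotomy b a with hba | rfl | hab
    · exact List.mem_append_left _ (hlt b hba)
    · exact ha
    · obtain ⟨c, rfl⟩ : ∃ c, b = a + c := ⟨b - a, (PNat.add_sub_of_lt hab).symm⟩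
      have hxw : x ∈ w := by
        rcases List.mem_append.mp hx with hx | hx
        · exact hx
        · exact absurd (List.mem_singleton.mp hx ▸ hb) (PNat.lt_add_right a c).not_ge
      obtain ⟨y, rfl⟩ : ∃ y, x = a + y :=
        ⟨x - a, (PNat.add_sub_of_lt ((PNat.lt_add_right a c).trans_le hb)).symm⟩
      rw [hshift] at hxw
      exact List.mem_append_left _ ((hshift c).mpr (hvpacked y hxw c (le_of_add_le_add_left hb)))

theorem exists_map_add_eq {a : ℕ+} {l : Word} (hl : ∀ x ∈ l, a < x) :
    ∃ v : Word, v.map (a + ·) = l :=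
  ⟨l.map (· - a), by
    rw [List.map_map]
    exact (List.map_congr_left fun x hx => PNat.add_sub_of_lt (hl x hx)).trans (List.map_id l)⟩

def splitByCompare (a : ℕ+) (w : Word) : List Ordering × Word × Word :=
  (w.map (compare · a), w.filter (· < a), w.filter (a < ·))

def interleave (a : ℕ+) : List Ordering → Word → Word → Word
  | .lt :: m, x :: u, v => x :: interleave a m u v
  | .eq :: m, u, v => a :: interleave a m u v
  | .gt :: m, u, x :: v => x :: interleave a m u v
  | _, _, _ => []

theorem interleave_splitByCompare (a : ℕ+) (w : Word) :
    interleave a (splitByCompare a w).1 (splitByCompare a w).2.1 (splitByCompare a w).2.2 = w := by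
  induction w with
  | nil => rfl
  | cons x w ih =>
    simp only [splitByCompare] at ih ⊢
    rcases lt_trichotomy x a with hx | rfl | hx
    · simp [compare_lt_iff_lt.mpr hx, hx, hx.not_gt, interleave, ih]
    · simp [interleave, ih]
    · simp [compare_gt_iff_gt.mpr hx, hx, hx.not_gt, interleave, ih]

theorem splitByCompare_interleave {a : ℕ+} {m : List Ordering} {u v : Word}
    (hu : ∀ x ∈ u, x < a) (hv : ∀ x ∈ v, a < x)
    (hcu : m.count .lt = u.length) (hcv : m.count .gt = v.length) :
    splitByCompare a (interleave a m u v) = (m, u, v) := by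
  induction m generalizing u v with
  | nil =>
    rw [List.length_eq_zero_iff.mp hcu.symm, List.length_eq_zero_iff.mp hcv.symm]
    rfl
  | cons o m ih =>
    cases o with
    | lt =>
      obtain ⟨x, u, rfl⟩ := List.exists_cons_of_length_eq_add_one (by simpa using hcu.symm)
      have hx := hu x List.mem_cons_self
      have := ih (fun y hy => hu y (List.mem_cons_of_mem x hy)) hv (by simpa using hcu)
        (by simpa using hcv)
      simp only [splitByCompare, Prod.mk.injEq] at this
      simp [interleave, splitByCompare, compare_lt_iff_lt.mpr hx, hx, hx.not_gt, this]
    | eq =>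
      have := ih hu hv (by simpa using hcu) (by simpa using hcv)
      simp only [splitByCompare, Prod.mk.injEq] at this
      simp [interleave, splitByCompare, this]
    | gt =>
      obtain ⟨x, v, rfl⟩ := List.exists_cons_of_length_eq_add_one (by simpa using hcv.symm)
      have hx := hv x List.mem_cons_self
      have := ih hu (fun y hy => hv y (List.mem_cons_of_mem x hy)) (by simpa using hcu)
        (by simpa using hcv)
      simp only [splitByCompare, Prod.mk.injEq] at this
      simp [interleave, splitByCompare, compare_gt_iff_gt.mpr hx, hx, hx.not_gt, this]

theorem count_map_compare (a : ℕ+) (w : Word) (o : Ordering) :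
    (w.map (compare · a)).count o = w.countP (compare · a = o) := by
  rw [List.count, List.countP_map]
  congr 1

theorem count_map_compare_lt (a : ℕ+) (w : Word) :
    (w.map (compare · a)).count .lt = (w.filter (· < a)).length := by
  simp [count_map_compare, compare_lt_iff_lt, List.countP_eq_length_filter]

theorem count_map_compare_eq (a : ℕ+) (w : Word) :
    (w.map (compare · a)).count .eq = w.count a := by
  simp only [count_map_compare, compare_eq_iff_eq]
  exact List.count_eq_countP.symm

theorem count_map_compare_gt (a : ℕ+) (w : Word) :
    (w.map (compare · a)).count .gt = (w.filter (a < ·)).length := by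
  simp [count_map_compare, compare_gt_iff_gt, List.countP_eq_length_filter]

section ListsWithCounts

variable {α : Type*}

theorem ncard_eq_sum_ncard_cons_preimage [Fintype α] {s : Set (List α)} (hs : s.Finite)
    (hnil : [] ∉ s) :
    s.ncard = ∑ i, (List.cons i ⁻¹' s).ncard := by
  have hs_eq : s = ⋃ i, List.cons i '' (List.cons i ⁻¹' s) := by
    ext l
    cases l with
    | nil => simp [hnil]
    | cons i t => simp
  have hdisj : Pairwise (Disjoint on fun i => List.cons i '' (List.cons i ⁻¹' s)) := by
    intro i j hij
    rw [Function.onFun, Set.disjoint_left]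
    rintro _ ⟨t, -, rfl⟩ ⟨t', -, h⟩
    exact hij (List.cons.inj h).1.symm
  calc s.ncard = (⋃ i, List.cons i '' (List.cons i ⁻¹' s)).ncard := by rw [← hs_eq]
    _ = ∑ i, (List.cons i ⁻¹' s).ncard := by
      rw [Set.ncard_iUnion_of_finite (fun i => hs.subset (Set.image_preimage_subset _ _)) hdisj,
        finsum_eq_sum_of_fintype]
      exact Finset.sum_congr rfl fun i _ => Set.ncard_image_of_injective _ List.cons_injective

theorem sum_count_eq_length [Fintype α] [DecidableEq α] (l : List α) :
    ∑ i, l.count i = l.length := by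
  simpa using Multiset.sum_count_eq_card (s := Finset.univ) (m := (l : Multiset α)) (by simp)

theorem cons_preimage_setOf_count_eq [DecidableEq α] {c : α → ℕ} {i : α} {d : ℕ}
    (hci : c i = d + 1) :
    List.cons i ⁻¹' {l | ∀ j, l.count j = c j} =
      {l | ∀ j, l.count j = Function.update c i d j} := by
  ext t
  refine forall_congr' fun j => ?_
  rcases eq_or_ne j i with rfl | hji
  · simp [hci]
  · simp [hji, hji.symm]

theorem ncard_setOf_count_eq_mul_prod_factorial [Fintype α] [DecidableEq α] (c : α → ℕ) :
    {l : List α | ∀ i, l.count i = c i}.ncard * ∏ i, (c i)! = (∑ i, c i)! := by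
  induction hn : ∑ i, c i generalizing c with
  | zero =>
    have hc : ∀ i, c i = 0 := by simpa using hn
    have hset : {l : List α | ∀ i, l.count i = c i} = {[]} := by
      ext l
      simp [hc, List.count_eq_zero, List.eq_nil_iff_forall_not_mem]
    rw [hset, Set.ncard_singleton]
    simp [hc]
  | succ n ih =>
    have hfin : {l : List α | ∀ i, l.count i = c i}.Finite :=
      (List.finite_length_eq α (n + 1)).subset fun l (hl : ∀ i, l.count i = c i) => by
        change l.length = n + 1
        rw [← sum_count_eq_length, ← hn]
        exact Finset.sum_congr rfl fun i _ => hl i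
    have hnil : [] ∉ {l : List α | ∀ i, l.count i = c i} := by
      intro h
      simp [← show ∀ i, 0 = c i from h] at hn
    rw [ncard_eq_sum_ncard_cons_preimage hfin hnil, Finset.sum_mul, Nat.factorial_succ, ← hn,
      Finset.sum_mul]
    refine Finset.sum_congr rfl fun i _ => ?_
    cases hci : c i with
    | zero =>
      have : List.cons i ⁻¹' {l | ∀ j, l.count j = c j} = ∅ :=
        Set.eq_empty_of_forall_notMem fun t ht => by simpa [hci] using ht i
      rw [this, Set.ncard_empty, zero_mul, zero_mul]
    | succ d =>
      have hrest : ∀ j ∈ ({i}ᶜ : Finset α), Function.update c i d j = c j := fun j hj =>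
        Function.update_of_ne (Finset.mem_compl.mp hj ∘ Finset.mem_singleton.mpr) _ _
      have hsum : ∑ j, Function.update c i d j = n := by
        rw [Fintype.sum_eq_add_sum_compl i, hci] at hn
        rw [Fintype.sum_eq_add_sum_compl i, Function.update_self, Finset.sum_congr rfl hrest]
        linarith
      have hprod : ∏ j, (c j)! = (d + 1) * ∏ j, (Function.update c i d j)! := by
        rw [Fintype.prod_eq_mul_prod_compl i,
          Fintype.prod_eq_mul_prod_compl i (fun j => (Function.update c i d j)!),
          Function.update_self, Finset.prod_congr rfl fun j hj => by rw [← hrest j hj], hci,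
          Nat.factorial_succ, mul_assoc]
      rw [cons_preimage_setOf_count_eq hci, hprod, mul_left_comm, ih _ hsum]

end ListsWithCounts

namespace BTM

def packedWords (T : BTM) : Set Word := {w | IsPacked w ∧ Bmap w = T}

/-- The letter at the root of `P(w)` for every packed `w` with `B(w) = node L k R`. -/
def rootLetter (L : BTM) : ℕ+ := L.numNodes.succPNat

/-- Occurrences of letters smaller than, equal to and larger than the root letter in
`w.dropLast`, for `w` a packed word with `B(w) = node L k R`. -/
def nodeCounts (L : BTM) (k : ℕ+) (R : BTM) : Ordering → ℕ
  | .lt => L.size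
  | .eq => k - 1
  | .gt => R.size

theorem sum_nodeCounts (L : BTM) (k : ℕ+) (R : BTM) :
    ∑ o, nodeCounts L k R o = (node L k R).size - 1 := by
  have := k.pos
  simp [Finset.univ, Fintype.elems, nodeCounts, size]
  omega

theorem prod_factorial_nodeCounts (L : BTM) (k : ℕ+) (R : BTM) :
    ∏ o, (nodeCounts L k R o)! = L.size ! * (k - 1 : ℕ)! * R.size ! := by
  simp [Finset.univ, Fintype.elems, nodeCounts, mul_assoc]

theorem packedWords_leaf : leaf.packedWords = {[]} := by
  ext w
  refine ⟨fun ⟨_, hw⟩ => List.eq_nil_of_length_eq_zero ?_, ?_⟩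
  · rw [← size_Bmap, hw]
    rfl
  · rintro rfl
    exact ⟨by simp [IsPacked], rfl⟩

theorem lt_rootLetter_of_mem_packedWords {L : BTM} {u : Word} (hu : u ∈ L.packedWords) :
    ∀ x ∈ u, x < L.rootLetter := by
  intro x hx
  have := (hu.1.mem_iff_le_card x).mp hx
  rw [← numNodes_Bmap, hu.2] at this
  exact Nat.lt_succ_of_le this

theorem append_singleton_mem_packedWords_node_iff {L R : BTM} {k : ℕ+} {w v : Word} {a : ℕ+}
    (hv : w.filter (a < ·) = v.map (a + ·)) :
    w ++ [a] ∈ (node L k R).packedWords ↔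
      a = L.rootLetter ∧ w.filter (· < a) ∈ L.packedWords ∧ w.count a + 1 = k ∧
        v ∈ R.packedWords := by
  have hu : ∀ x ∈ w.filter (· < a), x < a := fun x hx => by
    simpa using (List.mem_filter.mp hx).2
  have hlt : (∀ x < a, x ∈ w) ↔ ∀ x < a, x ∈ w.filter (· < a) :=
    forall₂_congr fun x hx => by simp [hx]
  have hk : (w.count a).succPNat = k ↔ w.count a + 1 = k := by
    rw [← PNat.coe_inj, Nat.succPNat_coe]
  simp only [packedWords, Set.mem_ofPred_eq]
  rw [isPacked_append_singleton_iff hv, hlt, forall_lt_mem_iff_isPacked hu,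
    Bmap_append_singleton, hv, Bmap_map (add_right_strictMono (a := a)), node.injEq, hk]
  constructor
  · rintro ⟨⟨⟨hup, ha⟩, hvp⟩, huL, hk, hvR⟩
    refine ⟨PNat.eq ?_, ⟨hup, huL⟩, hk, hvp, hvR⟩
    rw [ha, ← numNodes_Bmap, huL]
    rfl
  · rintro ⟨ha, ⟨hup, huL⟩, hk, hvp, hvR⟩
    refine ⟨⟨⟨hup, ?_⟩, hvp⟩, huL, hk, hvR⟩
    rw [← numNodes_Bmap, huL, ha]
    rfl

theorem splitByCompare_interleave_of_mem {L R : BTM} {k : ℕ+} {m : List Ordering} {u v : Word}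
    (hm : ∀ o, m.count o = nodeCounts L k R o) (hu : u ∈ L.packedWords)
    (hv : v ∈ R.packedWords) :
    splitByCompare L.rootLetter (interleave L.rootLetter m u (v.map (L.rootLetter + ·))) =
      (m, u, v.map (L.rootLetter + ·)) := by
  refine splitByCompare_interleave (lt_rootLetter_of_mem_packedWords hu) ?_ ?_ ?_
  · simp [PNat.lt_add_right]
  · rw [hm, nodeCounts, ← hu.2, size_Bmap]
  · rw [hm, nodeCounts, List.length_map, ← hv.2, size_Bmap]

/-- The shuffle `w.dropLast` is encoded by its pattern of comparisons with the root letter. -/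
theorem packedWords_node (L : BTM) (k : ℕ+) (R : BTM) :
    (node L k R).packedWords =
      (fun p : List Ordering × Word × Word =>
          interleave L.rootLetter p.1 p.2.1 (p.2.2.map (L.rootLetter + ·)) ++ [L.rootLetter]) ''
        ({m | ∀ o, m.count o = nodeCounts L k R o} ×ˢ L.packedWords ×ˢ R.packedWords) := by
  ext w
  constructor
  · intro hw
    obtain ⟨w, a, rfl⟩ : ∃ w' a, w = w' ++ [a] := by
      refine (List.eq_nil_or_concat' w).resolve_left fun hnil => ?_
      have := size_Bmap w
      rw [hw.2, hnil, size] at this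
      simp at this
    obtain ⟨v, hv⟩ := exists_map_add_eq (a := a) (l := w.filter (a < ·)) (by simp)
    obtain ⟨rfl, hu, hk, hvR⟩ := (append_singleton_mem_packedWords_node_iff hv.symm).mp hw
    refine ⟨(w.map (compare · L.rootLetter), w.filter (· < L.rootLetter), v),
      ⟨fun o => ?_, hu, hvR⟩, ?_⟩
    · cases o
      · rw [count_map_compare_lt, nodeCounts, ← size_Bmap, hu.2]
      · rw [count_map_compare_eq, nodeCounts, ← hk, Nat.add_sub_cancel]
      · rw [count_map_compare_gt, nodeCounts, ← hv, List.length_map, ← size_Bmap, hvR.2]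
    · change interleave _ _ _ (v.map _) ++ _ = _
      rw [hv]
      exact congrArg (· ++ [L.rootLetter]) (interleave_splitByCompare L.rootLetter w)
  · rintro ⟨⟨m, u, v⟩, ⟨hm, hu, hv⟩, rfl⟩
    have hsplit := splitByCompare_interleave_of_mem hm hu hv
    simp only [splitByCompare, Prod.mk.injEq] at hsplit
    obtain ⟨hmap, hfu, hfv⟩ := hsplit
    rw [append_singleton_mem_packedWords_node_iff hfv, hfu]
    refine ⟨rfl, hu, ?_, hv⟩
    rw [← count_map_compare_eq, hmap, hm, nodeCounts]
    have := k.pos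
    omega

theorem ncard_packedWords_node (L : BTM) (k : ℕ+) (R : BTM) :
    (node L k R).packedWords.ncard =
      {m : List Ordering | ∀ o, m.count o = nodeCounts L k R o}.ncard *
        (L.packedWords.ncard * R.packedWords.ncard) := by
  rw [packedWords_node, Set.InjOn.ncard_image, Set.ncard_prod, Set.ncard_prod]
  rintro ⟨m, u, v⟩ ⟨hm, hu, hv⟩ ⟨m', u', v'⟩ ⟨hm', hu', hv'⟩ h
  have h' := congrArg (splitByCompare L.rootLetter) (List.append_cancel_right h)
  rw [splitByCompare_interleave_of_mem hm hu hv, splitByCompare_interleave_of_mem hm' hu' hv',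
    Prod.mk.injEq, Prod.mk.injEq] at h'
  obtain ⟨rfl, rfl, hvv⟩ := h'
  simp only [Prod.mk.injEq, true_and]
  exact List.map_injective_iff.mpr (add_right_injective _) hvv

theorem ncard_packedWords_mul_hookProd (T : BTM) :
    T.packedWords.ncard * hookProd T = T.size ! := by
  induction T with
  | leaf => simp [packedWords_leaf, hookProd, size]
  | node L k R ihL ihR =>
    have hmasks := ncard_setOf_count_eq_mul_prod_factorial (nodeCounts L k R)
    rw [sum_nodeCounts, prod_factorial_nodeCounts] at hmasks
    have hsize : (node L k R).size ≠ 0 := by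
      have := k.pos
      simp only [size]
      omega
    rw [ncard_packedWords_node, hookProd, ← Nat.mul_factorial_pred hsize, ← hmasks, ← ihL,
      ← ihR]
    ring

end BTM

theorem hook_length_formula (T : BTM) :
    (fT T : ℚ) = (T.size.factorial : ℚ) / (hookProd T : ℚ) := by
  have key := T.ncard_packedWords_mul_hookProd
  have hhook : hookProd T ≠ 0 := right_ne_zero_of_mul (key ▸ Nat.factorial_ne_zero _)
  rw [eq_div_iff (Nat.cast_ne_zero.mpr hhook)]
  exact_mod_cast key
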